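/- Let Ω ⊆ ℝ² be a bounded open set. Let λ ≥ 0 and let f : ℝ² → ℝ be continuous on the closure of Ω, twice continuously differentiable on Ω, vanish on the topological boundary of Ω, and satisfy Δf = −λ f on Ω, where Δ denotes the Laplacian (the sum of the two second partial derivatives). Let U : ℝ² → ℝ be continuous on the closure of Ω, twice continuously differentiable on Ω, vanish on the boundary of Ω, and satisfy ΔU = −1 on Ω. Then for every x ∈ Ω, |f(x)| ≤ λ · (sup over y in the closure of Ω of |f(y)|) · U(x). -/

import Mathlib

/-- The Laplacian of a function `g : ℝ² → ℝ`: the sum of the two second partial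
derivatives, `Δg(x) = ∂²g/∂x₁²(x) + ∂²g/∂x₂²(x)`. -/
noncomputable def laplacian2 (g : EuclideanSpace ℝ (Fin 2) → ℝ)
    (x : EuclideanSpace ℝ (Fin 2)) : ℝ :=
  ∑ i : Fin 2,
    fderiv ℝ (fun y => fderiv ℝ g y (EuclideanSpace.single i 1)) x
      (EuclideanSpace.single i 1)

open Filter Topology Set

/-- For a C² function on an open set, `y ↦ (fderiv g y) v` is differentiable. -/
lemma diffAt_fderiv_apply {Ω : Set (EuclideanSpace ℝ (Fin 2))} (hΩ : IsOpen Ω)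
    {g : EuclideanSpace ℝ (Fin 2) → ℝ} (hg : ContDiffOn ℝ 2 g Ω)
    {x : EuclideanSpace ℝ (Fin 2)} (hx : x ∈ Ω) (v : EuclideanSpace ℝ (Fin 2)) :
    DifferentiableAt ℝ (fun y => fderiv ℝ g y v) x := by
  have h1 : ContDiffOn ℝ 1 (fun y => fderiv ℝ g y) Ω :=
    hg.fderiv_of_isOpen hΩ (by norm_num)
  have h2 : DifferentiableAt ℝ (fun y => fderiv ℝ g y) x :=
    (h1.differentiableOn one_ne_zero).differentiableAt (hΩ.mem_nhds hx)
  exact h2.clm_apply (differentiableAt_const v)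

/-- At an interior minimum of a C² function, each pure second partial derivative is
nonnegative. -/
lemma secondDeriv_nonneg_of_min {Ω : Set (EuclideanSpace ℝ (Fin 2))} (hΩ : IsOpen Ω)
    {w : EuclideanSpace ℝ (Fin 2) → ℝ} (hw : ContDiffOn ℝ 2 w Ω)
    {x : EuclideanSpace ℝ (Fin 2)} (hx : x ∈ Ω) (hmin : ∀ y ∈ Ω, w x ≤ w y)
    (v : EuclideanSpace ℝ (Fin 2)) :
    0 ≤ fderiv ℝ (fun y => fderiv ℝ w y v) x v := by
  by_contra hneg
  push_neg at hneg
  set F : EuclideanSpace ℝ (Fin 2) → ℝ := fun y => fderiv ℝ w y v with hF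
  set c : ℝ := fderiv ℝ F x v with hc
  set ℓ : ℝ → EuclideanSpace ℝ (Fin 2) := fun t => x + t • v with hℓ
  have hℓ0 : ℓ 0 = x := by simp [hℓ]
  have hℓd : ∀ t : ℝ, HasDerivAt ℓ v t := by
    intro t
    simpa [hℓ] using ((hasDerivAt_id t).smul_const v).const_add x
  have hℓcont : Continuous ℓ := by
    have : ∀ t : ℝ, HasDerivAt ℓ v t := hℓd
    exact continuous_iff_continuousAt.mpr fun t => (this t).continuousAt
  have hmem : ∀ᶠ t in 𝓝 (0 : ℝ), ℓ t ∈ Ω := by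
    have : Ω ∈ 𝓝 (ℓ 0) := by rw [hℓ0]; exact hΩ.mem_nhds hx
    exact hℓcont.continuousAt.preimage_mem_nhds this
  obtain ⟨δ₀, hδ₀, hball⟩ := Metric.eventually_nhds_iff.mp hmem
  set g : ℝ → ℝ := fun t => w (ℓ t) with hg
  have hgderiv : ∀ t : ℝ, ℓ t ∈ Ω → HasDerivAt g (F (ℓ t)) t := by
    intro t ht
    have hdw : DifferentiableAt ℝ w (ℓ t) :=
      (hw.differentiableOn (by norm_num)).differentiableAt (hΩ.mem_nhds ht)
    exact hdw.hasFDerivAt.comp_hasDerivAt t (hℓd t)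
  have hgmin : IsLocalMin g 0 := by
    filter_upwards [hmem] with t ht
    have := hmin (ℓ t) ht
    simpa [hg, hℓ0] using this
  have hF0 : F x = 0 := by
    have hd0 : HasDerivAt g (F (ℓ 0)) 0 := hgderiv 0 (by rw [hℓ0]; exact hx)
    have hz := hgmin.deriv_eq_zero
    rw [hd0.deriv] at hz
    rwa [hℓ0] at hz
  have hFd : DifferentiableAt ℝ F x := diffAt_fderiv_apply hΩ hw hx v
  have hFAt : HasFDerivAt F (fderiv ℝ F x) (ℓ 0) := hℓ0 ▸ hFd.hasFDerivAt
  have hGd : HasDerivAt (fun t => F (ℓ t)) c 0 := hFAt.comp_hasDerivAt 0 (hℓd 0)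
  have hslope : Tendsto (fun t => F (ℓ t) / t) (𝓝[≠] (0 : ℝ)) (𝓝 c) := by
    have h1 := hasDerivAt_iff_tendsto_slope.mp hGd
    have : (slope (fun t => F (ℓ t)) 0) = fun t => F (ℓ t) / t := by
      funext t
      simp [slope_def_field, hℓ0, hF0]
    rwa [this] at h1
  have hev : ∀ᶠ t in 𝓝[≠] (0 : ℝ), F (ℓ t) / t < 0 := hslope (Iio_mem_nhds hneg)
  have hev' : ∀ᶠ t in 𝓝 (0 : ℝ), t ≠ 0 → F (ℓ t) / t < 0 :=
    eventually_nhdsWithin_iff.mp hev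
  obtain ⟨δ₁, hδ₁, hball₁⟩ := Metric.eventually_nhds_iff.mp hev'
  set t₀ : ℝ := min δ₀ δ₁ / 2 with ht₀
  have ht₀pos : 0 < t₀ := by positivity
  have ht₀lt₀ : t₀ < δ₀ := by
    have : min δ₀ δ₁ ≤ δ₀ := min_le_left _ _
    linarith
  have ht₀lt₁ : t₀ < δ₁ := by
    have : min δ₀ δ₁ ≤ δ₁ := min_le_right _ _
    linarith
  have hmemIcc : ∀ t ∈ Icc (0 : ℝ) t₀, ℓ t ∈ Ω := by
    intro t ht
    apply hball
    rw [Real.dist_eq, sub_zero, abs_of_nonneg ht.1]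
    linarith [ht.2]
  have hcontg : ContinuousOn g (Icc (0 : ℝ) t₀) := by
    intro t ht
    exact ((hgderiv t (hmemIcc t ht)).continuousAt).continuousWithinAt
  have hderivneg : ∀ t ∈ interior (Icc (0 : ℝ) t₀), deriv g t < 0 := by
    intro t ht
    rw [interior_Icc] at ht
    have htΩ : ℓ t ∈ Ω := hmemIcc t ⟨le_of_lt ht.1, le_of_lt ht.2⟩
    rw [(hgderiv t htΩ).deriv]
    have hs : F (ℓ t) / t < 0 := by
      apply hball₁ _ (ne_of_gt ht.1)
      rw [Real.dist_eq, sub_zero, abs_of_pos ht.1]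
      linarith [ht.2]
    by_contra hge
    push_neg at hge
    have : 0 ≤ F (ℓ t) / t := div_nonneg hge (le_of_lt ht.1)
    linarith
  have hanti : StrictAntiOn g (Icc (0 : ℝ) t₀) :=
    strictAntiOn_of_deriv_neg (convex_Icc _ _) hcontg hderivneg
  have hlt : g t₀ < g 0 :=
    hanti (by constructor <;> [exact le_refl 0; exact le_of_lt ht₀pos])
      (by constructor <;> [exact le_of_lt ht₀pos; exact le_refl t₀]) ht₀pos
  have hge : g 0 ≤ g t₀ := by
    have : ℓ t₀ ∈ Ω := hmemIcc t₀ ⟨le_of_lt ht₀pos, le_refl _⟩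
    have := hmin (ℓ t₀) this
    simpa [hg, hℓ0] using this
  linarith

/-- Linearity of the Laplacian for C² functions on an open set. -/
lemma laplacian2_combo {Ω : Set (EuclideanSpace ℝ (Fin 2))} (hΩ : IsOpen Ω)
    {g k : EuclideanSpace ℝ (Fin 2) → ℝ} (hg : ContDiffOn ℝ 2 g Ω) (hk : ContDiffOn ℝ 2 k Ω)
    (a b : ℝ) {x : EuclideanSpace ℝ (Fin 2)} (hx : x ∈ Ω) :
    laplacian2 (fun z => a * g z + b * k z) x = a * laplacian2 g x + b * laplacian2 k x := by
  unfold laplacian2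
  rw [Finset.mul_sum, Finset.mul_sum, ← Finset.sum_add_distrib]
  refine Finset.sum_congr rfl fun i _ => ?_
  set v := EuclideanSpace.single i (1 : ℝ) with hv
  have hev : (fun y => fderiv ℝ (fun z => a * g z + b * k z) y v) =ᶠ[𝓝 x]
      (fun y => a * fderiv ℝ g y v + b * fderiv ℝ k y v) := by
    filter_upwards [hΩ.mem_nhds hx] with y hy
    have hgy : DifferentiableAt ℝ g y :=
      (hg.differentiableOn (by norm_num)).differentiableAt (hΩ.mem_nhds hy)
    have hky : DifferentiableAt ℝ k y :=
      (hk.differentiableOn (by norm_num)).differentiableAt (hΩ.mem_nhds hy)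
    have hcomb : HasFDerivAt (fun z => a * g z + b * k z)
        (a • fderiv ℝ g y + b • fderiv ℝ k y) y :=
      (hgy.hasFDerivAt.const_mul a).add (hky.hasFDerivAt.const_mul b)
    rw [hcomb.fderiv]
    simp
  rw [hev.fderiv_eq]
  have hg2 := diffAt_fderiv_apply hΩ hg hx v
  have hk2 := diffAt_fderiv_apply hΩ hk hx v
  have hcomb2 : HasFDerivAt (fun y => a * fderiv ℝ g y v + b * fderiv ℝ k y v)
      (a • fderiv ℝ (fun y => fderiv ℝ g y v) x + b • fderiv ℝ (fun y => fderiv ℝ k y v) x) x :=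
    (hg2.hasFDerivAt.const_mul a).add (hk2.hasFDerivAt.const_mul b)
  rw [hcomb2.fderiv]
  simp

/-- The Laplacian of `y ↦ (y 0)²` is `2`. -/
lemma laplacian2_quad (x : EuclideanSpace ℝ (Fin 2)) :
    laplacian2 (fun y => (EuclideanSpace.proj (0 : Fin 2) : EuclideanSpace ℝ (Fin 2) →L[ℝ] ℝ) y *
      (EuclideanSpace.proj (0 : Fin 2) : EuclideanSpace ℝ (Fin 2) →L[ℝ] ℝ) y) x = 2 := by
  set L : EuclideanSpace ℝ (Fin 2) →L[ℝ] ℝ := EuclideanSpace.proj (0 : Fin 2) with hL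
  have hfd : ∀ y : EuclideanSpace ℝ (Fin 2),
      fderiv ℝ (fun z => L z * L z) y = L y • L + L y • L := by
    intro y
    exact ((L.hasFDerivAt).mul (L.hasFDerivAt)).fderiv
  unfold laplacian2
  have hterm : ∀ i : Fin 2,
      fderiv ℝ (fun y => fderiv ℝ (fun z => L z * L z) y (EuclideanSpace.single i 1)) x
        (EuclideanSpace.single i 1)
      = 2 * (L (EuclideanSpace.single i 1)) * (L (EuclideanSpace.single i 1)) := by
    intro i
    set v := EuclideanSpace.single i (1 : ℝ) with hv
    have heq : (fun y => fderiv ℝ (fun z => L z * L z) y v) =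
        fun y => (2 * L v) * L y := by
      funext y
      rw [hfd y]
      simp
      ring
    rw [heq]
    have : HasFDerivAt (fun y => (2 * L v) * L y) ((2 * L v) • (L : EuclideanSpace ℝ (Fin 2) →L[ℝ] ℝ)) x :=
      (L.hasFDerivAt).const_mul (2 * L v)
    rw [this.fderiv]
    simp
  rw [Fin.sum_univ_two, hterm 0, hterm 1]
  have h0 : L (EuclideanSpace.single (0 : Fin 2) (1 : ℝ)) = 1 := by
    simp [hL, EuclideanSpace.single_apply]
  have h1 : L (EuclideanSpace.single (1 : Fin 2) (1 : ℝ)) = 0 := by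
    simp [hL, EuclideanSpace.single_apply]
  rw [h0, h1]
  ring

/-- Weak minimum principle: a superharmonic function vanishing on the boundary of a bounded
open set is nonnegative inside. -/
lemma min_principle {Ω : Set (EuclideanSpace ℝ (Fin 2))} (hΩo : IsOpen Ω)
    (hΩb : Bornology.IsBounded Ω) {w : EuclideanSpace ℝ (Fin 2) → ℝ}
    (hw_cont : ContinuousOn w (closure Ω)) (hw_smooth : ContDiffOn ℝ 2 w Ω)
    (hw_bdry : ∀ x ∈ frontier Ω, w x = 0)
    (hw_lap : ∀ x ∈ Ω, laplacian2 w x ≤ 0) :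
    ∀ x ∈ Ω, 0 ≤ w x := by
  intro x hx
  set L : EuclideanSpace ℝ (Fin 2) →L[ℝ] ℝ := EuclideanSpace.proj (0 : Fin 2) with hL
  set h : EuclideanSpace ℝ (Fin 2) → ℝ := fun y => L y * L y with hh
  have hh_cd : ContDiff ℝ 2 h := L.contDiff.mul L.contDiff
  have hcl : IsCompact (closure Ω) := hΩb.isCompact_closure
  have hne : (closure Ω).Nonempty := ⟨x, subset_closure hx⟩
  obtain ⟨C, hC⟩ := (hcl.image_of_continuousOn hh_cd.continuous.continuousOn).bddAbove
  have hCb : ∀ y ∈ closure Ω, h y ≤ C := fun y hy => hC ⟨y, hy, rfl⟩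
  have hC0 : 0 ≤ C := le_trans (mul_self_nonneg _) (hCb x (subset_closure hx))
  have key : ∀ ε : ℝ, 0 < ε → -(ε * C) ≤ w x := by
    intro ε hε
    set wε : EuclideanSpace ℝ (Fin 2) → ℝ := fun y => w y + (-ε) * h y with hwε
    have hwεc : ContinuousOn wε (closure Ω) :=
      hw_cont.add (continuousOn_const.mul hh_cd.continuous.continuousOn)
    obtain ⟨x₀, hx₀mem, hx₀min⟩ := hcl.exists_isMinOn hne hwεc
    have hx₀min' : ∀ y ∈ closure Ω, wε x₀ ≤ wε y := fun y hy => hx₀min hy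
    by_cases hx₀ : x₀ ∈ Ω
    · exfalso
      have hmin' : ∀ y ∈ Ω, wε x₀ ≤ wε y := fun y hy => hx₀min' y (subset_closure hy)
      have hsm : ContDiffOn ℝ 2 wε Ω :=
        hw_smooth.add (contDiffOn_const.mul hh_cd.contDiffOn)
      have hlap : laplacian2 wε x₀ = laplacian2 w x₀ + (-ε) * 2 := by
        have hcombo := laplacian2_combo hΩo hw_smooth hh_cd.contDiffOn 1 (-ε) hx₀
        have heq : wε = fun z => 1 * w z + (-ε) * h z := by
          funext z; simp [hwε]
        rw [heq, hcombo, laplacian2_quad]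
        ring
      have hge : 0 ≤ laplacian2 wε x₀ := by
        unfold laplacian2
        apply Finset.sum_nonneg
        intro i _
        exact secondDeriv_nonneg_of_min hΩo hsm hx₀ hmin' _
      have := hw_lap x₀ hx₀
      rw [hlap] at hge
      linarith
    · have hfr : x₀ ∈ frontier Ω := by
        rw [frontier]
        exact ⟨hx₀mem, by rwa [hΩo.interior_eq]⟩
      have hw0 : w x₀ = 0 := hw_bdry x₀ hfr
      have h1 : wε x₀ ≤ wε x := hx₀min' x (subset_closure hx)
      have h2 : -(ε * C) ≤ wε x₀ := by
        have := hCb x₀ hx₀mem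
        simp only [hwε, hw0, zero_add]
        nlinarith
      have h3 : wε x ≤ w x := by
        have : 0 ≤ h x := mul_self_nonneg _
        simp only [hwε]
        nlinarith
      linarith
  by_cases hCz : C = 0
  · have := key 1 one_pos
    rw [hCz] at this
    linarith
  · have hCpos : 0 < C := lt_of_le_of_ne hC0 (Ne.symm hCz)
    have : ∀ ε : ℝ, 0 < ε → -(w x) ≤ 0 + ε := by
      intro ε hε
      have hk := key (ε / C) (by positivity)
      have : (ε / C) * C = ε := div_mul_cancel₀ ε hCz
      rw [this] at hk
      linarith
    have := le_of_forall_pos_le_add this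
    linarith

/-- A Dirichlet eigenfunction `f` of the Laplacian on a bounded open set `Ω ⊆ ℝ²`, with
eigenvalue `λ ≥ 0`, is pointwise dominated by `λ ‖f‖_∞ U`, where `U` is the torsion
function of `Ω`, i.e. the solution of `-ΔU = 1` in `Ω`, `U = 0` on `∂Ω`. -/
theorem eigenfunction_le_torsion
    (Ω : Set (EuclideanSpace ℝ (Fin 2))) (hΩo : IsOpen Ω) (hΩb : Bornology.IsBounded Ω)
    (lam : ℝ) (hlam : 0 ≤ lam) (f U : EuclideanSpace ℝ (Fin 2) → ℝ)
    (hf_cont : ContinuousOn f (closure Ω)) (hf_smooth : ContDiffOn ℝ 2 f Ω)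
    (hf_bdry : ∀ x ∈ frontier Ω, f x = 0)
    (hf_eig : ∀ x ∈ Ω, laplacian2 f x = -(lam * f x))
    (hU_cont : ContinuousOn U (closure Ω)) (hU_smooth : ContDiffOn ℝ 2 U Ω)
    (hU_bdry : ∀ x ∈ frontier Ω, U x = 0)
    (hU_eq : ∀ x ∈ Ω, laplacian2 U x = -1) :
    ∀ x ∈ Ω, |f x| ≤ lam * (⨆ y ∈ closure Ω, |f y|) * U x := by
  intro x hx
  set M : ℝ := ⨆ y ∈ closure Ω, |f y| with hM
  have hcl : IsCompact (closure Ω) := hΩb.isCompact_closure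
  have hbdd : BddAbove (Set.range fun y => ⨆ _ : y ∈ closure Ω, |f y|) := by
    obtain ⟨C, hC⟩ := hcl.exists_bound_of_continuousOn hf_cont
    refine ⟨max C 0, ?_⟩
    rintro _ ⟨y, rfl⟩
    show (⨆ _ : y ∈ closure Ω, |f y|) ≤ max C 0
    by_cases hy : y ∈ closure Ω
    · haveI : Nonempty (y ∈ closure Ω) := ⟨hy⟩
      refine ciSup_le fun _ => ?_
      have := hC y hy
      rw [Real.norm_eq_abs] at this
      exact le_trans this (le_max_left _ _)
    · haveI : IsEmpty (y ∈ closure Ω) := ⟨hy⟩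
      rw [Real.iSup_of_isEmpty]
      exact le_max_right _ _
  have hMub : ∀ y ∈ closure Ω, |f y| ≤ M := by
    intro y hy
    have h1 : |f y| ≤ ⨆ _ : y ∈ closure Ω, |f y| :=
      le_ciSup (f := fun _ : y ∈ closure Ω => |f y|) (Set.finite_range _).bddAbove hy
    exact le_trans h1 (le_ciSup hbdd y)
  have hM0 : 0 ≤ M := le_trans (abs_nonneg _) (hMub x (subset_closure hx))
  have main : ∀ s : ℝ, s = 1 ∨ s = -1 → ∀ z ∈ Ω, 0 ≤ lam * M * U z + s * f z := by
    intro s hs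
    apply min_principle hΩo hΩb (w := fun y => lam * M * U y + s * f y)
    · exact (continuousOn_const.mul hU_cont).add (continuousOn_const.mul hf_cont)
    · exact (contDiffOn_const.mul hU_smooth).add (contDiffOn_const.mul hf_smooth)
    · intro z hz; rw [hU_bdry z hz, hf_bdry z hz]; ring
    · intro z hz
      have hcombo := laplacian2_combo hΩo hU_smooth hf_smooth (lam * M) s hz
      rw [hcombo, hU_eq z hz, hf_eig z hz]
      have hfz : |f z| ≤ M := hMub z (subset_closure hz)
      obtain ⟨hl, hr⟩ := abs_le.mp hfz
      rcases hs with rfl | rfl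
      · nlinarith
      · nlinarith
  have h1 := main 1 (Or.inl rfl) x hx
  have h2 := main (-1) (Or.inr rfl) x hx
  rw [abs_le]
  constructor
  · linarith
  · linarith
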